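/- For every simplicial space X, the object X × N(I[1]) is a very good cylinder object for X in the injective (Reedy) model structure on simplicial spaces: the map X ⊔ X → X × N(I[1]) induced by the two object inclusions of I[1] is a cofibration, and the projection X × N(I[1]) → X is a trivial fibration. -/

import Mathlib

/-!
STATEMENT 15: For every simplicial space `X`, the object `X × N(I[1])` is a very
good cylinder object for `X` in the injective (Reedy) model structure on
simplicial spaces: the map `X ⊔ X → X × N(I[1])` induced by the two object
inclusions of the free-living isomorphism `I[1]` is a cofibration (levelwise
monomorphism), and the projection `X × N(I[1]) → X` is a trivial (Reedy)
fibration.  Here `N` is Rezk's classifying diagram; since `I[1]` is the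
codiscrete groupoid on two objects, `N(I[1])_{n,m}` is the set of functions
`Fin (m+1) → Fin (n+1) → Bool` (functors `[m] × [n] → I[1]`), with simplicial
structure by precomposition.
-/

open CategoryTheory Limits Opposite Simplicial

noncomputable section

/-! ### Weak homotopy equivalences of simplicial sets -/

/-- The unique map to the point `Δ[0]`. -/
def toPoint (X : SSet) : X ⟶ Δ[0] where
  app m := TypeCat.ofHom fun _ => ULift.up (SimplexCategory.Hom.mk ⟨fun _ => 0, monotone_const⟩)
  naturality := by
    intro a b g
    ext x
    apply congrArg ULift.up
    apply SimplexCategory.Hom.ext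
    apply OrderHom.ext
    funext v
    apply Subsingleton.elim (α := Fin 1)

/-- The two endpoints `Δ[0] ⟶ Δ[1]`. -/
def pt0 : Δ[0] ⟶ Δ[1] := SSet.stdSimplex.map (SimplexCategory.δ 1)
def pt1 : Δ[0] ⟶ Δ[1] := SSet.stdSimplex.map (SimplexCategory.δ 0)

/-- Simplicial homotopy of maps `X ⟶ Z`, via the cylinder `X ⨯ Δ[1]`. -/
def SHtpy {X Z : SSet} (f g : X ⟶ Z) : Prop :=
  ∃ H : (X ⨯ Δ[1] : SSet) ⟶ Z,
    prod.lift (𝟙 X) (toPoint X ≫ pt0) ≫ H = f ∧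
    prod.lift (𝟙 X) (toPoint X ≫ pt1) ≫ H = g

/-- The definition of `SSet.KanComplex` in the Mathlib of December 2024 (horn filling
for all `n`, including `n = 0`). -/
def KanComplexOld (S : SSet) : Prop :=
  ∀ ⦃n : ℕ⦄ ⦃i : Fin (n+1)⦄ (σ₀ : (Λ[n, i] : SSet) ⟶ S),
    ∃ σ : Δ[n] ⟶ S, σ₀ = Λ[n, i].ι ≫ σ

/-- A map of simplicial sets is a weak homotopy equivalence iff for every Kan
complex `Z` it induces a bijection on homotopy classes of maps into `Z`. -/
def IsWeakEquiv {X Y : SSet} (f : X ⟶ Y) : Prop :=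
  ∀ Z : SSet, KanComplexOld Z →
    (∀ u : X ⟶ Z, ∃ v : Y ⟶ Z, SHtpy (f ≫ v) u) ∧
    (∀ v w : Y ⟶ Z, SHtpy (f ≫ v) (f ≫ w) → SHtpy v w)

/-- A trivial fibration of simplicial sets: right lifting property against all
(levelwise) monomorphisms. -/
def IsTrivialFibration {X Y : SSet} (p : X ⟶ Y) : Prop :=
  ∀ ⦃A B : SSet⦄ (j : A ⟶ B), (∀ m, Function.Injective (j.app m)) → HasLiftingProperty j p

/-! ### Simplicial spaces and the injective (Reedy) model structure -/

/-- Simplicial spaces. -/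
abbrev SimpSpace := SimplexCategoryᵒᵖ ⥤ SSet

/-- Levelwise cofibrations (monomorphisms) of simplicial spaces. -/
def LwMono {X Y : SimpSpace} (f : X ⟶ Y) : Prop :=
  ∀ d m, Function.Injective ((f.app d).app m)

/-- Levelwise weak equivalences of simplicial spaces. -/
def LwWeq {X Y : SimpSpace} (f : X ⟶ Y) : Prop :=
  ∀ d, IsWeakEquiv (f.app d)

/-- Reedy (injective) fibrations of simplicial spaces: right lifting property
against all trivial cofibrations, i.e. levelwise monos which are levelwise weak
equivalences. -/
def ReedyFibration {X Y : SimpSpace} (f : X ⟶ Y) : Prop :=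
  ∀ ⦃U V : SimpSpace⦄ (j : U ⟶ V), LwMono j → LwWeq j → HasLiftingProperty j f

/-- Trivial Reedy fibrations: right lifting property against all cofibrations. -/
def TrivialReedyFibration {X Y : SimpSpace} (f : X ⟶ Y) : Prop :=
  ∀ ⦃U V : SimpSpace⦄ (j : U ⟶ V), LwMono j → HasLiftingProperty j f

/-- Reedy fibrant simplicial spaces. -/
def ReedyFibrant (X : SimpSpace) : Prop :=
  ReedyFibration (terminal.from X)

/-! ### Segal spaces -/

/-- Source vertex map `X₁ ⟶ X₀` (restriction along `⟨0⟩ = δ¹ : [0] → [1]`). -/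
def srcM (X : SimpSpace) : X.obj (op ⦋1⦌) ⟶ X.obj (op ⦋0⦌) :=
  X.map (SimplexCategory.δ 1).op

/-- Target vertex map `X₁ ⟶ X₀` (restriction along `⟨1⟩ = δ⁰ : [0] → [1]`). -/
def tgtM (X : SimpSpace) : X.obj (op ⦋1⦌) ⟶ X.obj (op ⦋0⦌) :=
  X.map (SimplexCategory.δ 0).op

/-- The `i`-th edge `[1] ⟶ [n]`, `j ↦ i + j`. -/
def edgeHom (n : ℕ) (i : Fin n) : (⦋1⦌ : SimplexCategory) ⟶ ⦋n⦌ :=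
  SimplexCategory.mkHom
    ⟨fun j => ⟨i.1 + j.1, by have hi := i.2; have hj := j.2; omega⟩, by
      intro a b hab
      have : a.1 ≤ b.1 := hab
      simp only [Fin.mk_le_mk]
      omega⟩

/-- The (iterated homotopy) fiber product `X₁ ×_{X₀} ⋯ ×_{X₀} X₁` of `n` copies
of `X₁`, the codomain of the `n`-th Segal map. -/
def SpineLim (X : SimpSpace) (n : ℕ) : SSet where
  obj m :=
    { f : Fin n → (X.obj (op ⦋1⦌)).obj m //
      ∀ (i : ℕ) (h1 : i + 1 < n),
        (tgtM X).app m (f ⟨i, by omega⟩) = (srcM X).app m (f ⟨i + 1, h1⟩) }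
  map {m m'} g := TypeCat.ofHom fun p =>
    ⟨fun i => (X.obj (op ⦋1⦌)).map g (p.1 i), by
      intro i h1
      have h := p.2 i h1
      rw [NatTrans.naturality_apply, NatTrans.naturality_apply, h]⟩
  map_id := by
    intro m
    ext p i
    simp
  map_comp := by
    intro m m' m'' g h
    ext p i
    simp

/-- The `n`-th Segal map `X_n ⟶ X₁ ×_{X₀} ⋯ ×_{X₀} X₁`. -/
def segalMap (X : SimpSpace) (n : ℕ) : X.obj (op ⦋n⦌) ⟶ SpineLim X n where
  app m := TypeCat.ofHom fun x =>
    ⟨fun i => (X.map (edgeHom n i).op).app m x, by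
      intro i h1
      have key : (SimplexCategory.δ 0 ≫ edgeHom n ⟨i, by omega⟩ : (⦋0⦌ : SimplexCategory) ⟶ ⦋n⦌) =
          SimplexCategory.δ 1 ≫ edgeHom n ⟨i + 1, h1⟩ := by
        apply SimplexCategory.Hom.ext
        apply OrderHom.ext
        funext v
        have hv : v = 0 := Subsingleton.elim (α := Fin 1) v 0
        subst hv
        apply Fin.ext
        simp [edgeHom, SimplexCategory.δ, Fin.succAbove]
        rfl
      have e1 : (tgtM X).app m ((X.map (edgeHom n ⟨i, by omega⟩).op).app m x) =
          (X.map (SimplexCategory.δ 0 ≫ edgeHom n ⟨i, by omega⟩).op).app m x := by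
        rw [op_comp, X.map_comp]; rfl
      have e2 : (srcM X).app m ((X.map (edgeHom n ⟨i + 1, h1⟩).op).app m x) =
          (X.map (SimplexCategory.δ 1 ≫ edgeHom n ⟨i + 1, h1⟩).op).app m x := by
        rw [op_comp, X.map_comp]; rfl
      rw [e1, e2, key]⟩
  naturality := by
    intro m m' g
    ext x
    apply Subtype.ext
    funext i
    exact NatTrans.naturality_apply (X.map (edgeHom n i).op) g x

/-- A Segal space: a Reedy fibrant simplicial space whose Segal maps are weak
equivalences. -/
def IsSegalSpace (X : SimpSpace) : Prop :=
  ReedyFibrant X ∧ ∀ n, 2 ≤ n → IsWeakEquiv (segalMap X n)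


/-! ### Mapping spaces (fibers), path components, composites -/

/-- The set of objects (vertices) of a simplicial space. -/
abbrev Vtx (X : SimpSpace) := (X.obj (op ⦋0⦌)).obj (op ⦋0⦌)

/-- The set of `1`-morphism vertices of a simplicial space. -/
abbrev EdgeVtx (X : SimpSpace) := (X.obj (op ⦋1⦌)).obj (op ⦋0⦌)

/-- Any two maps into `[0]` agree. -/
lemma toZeroUnique {a : SimplexCategory} (f g : a ⟶ ⦋0⦌) : f = g := by
  apply SimplexCategory.Hom.ext
  apply OrderHom.ext
  funext v
  exact Subsingleton.elim (α := Fin 1) _ _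

/-- The unique map `m ⟶ [0]`. -/
def toZero (a : SimplexCategory) : a ⟶ ⦋0⦌ :=
  SimplexCategory.Hom.mk ⟨fun _ => 0, monotone_const⟩

/-- The constant extension of a vertex `x ∈ X₀` to an arbitrary level `m`. -/
def cstAt (X : SimpSpace) (x : Vtx X) (m : SimplexCategoryᵒᵖ) : (X.obj (op ⦋0⦌)).obj m :=
  (X.obj (op ⦋0⦌)).map (toZero m.unop).op x

lemma cst_natural (X : SimpSpace) (x : Vtx X) {m m' : SimplexCategoryᵒᵖ} (g : m ⟶ m') :
    (X.obj (op ⦋0⦌)).map g (cstAt X x m) = cstAt X x m' := by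
  dsimp [cstAt]
  rw [← FunctorToTypes.map_comp_apply]
  have he : (toZero m.unop).op ≫ g = (toZero m'.unop).op := by
    rw [show (toZero m.unop).op ≫ g = (g.unop ≫ toZero m.unop).op from rfl]
    exact congrArg Quiver.Hom.op (toZeroUnique _ _)
  rw [he]

/-- Source object of a `1`-morphism vertex. -/
def vsrc (X : SimpSpace) (f : EdgeVtx X) : Vtx X := (srcM X).app (op ⦋0⦌) f

/-- Target object of a `1`-morphism vertex. -/
def vtgt (X : SimpSpace) (f : EdgeVtx X) : Vtx X := (tgtM X).app (op ⦋0⦌) f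

/-- The mapping space `X(x,y)`: the fiber of `(source, target) : X₁ → X₀ × X₀`
over the pair of vertices `(x, y)`. -/
def mapFiber (X : SimpSpace) (x y : Vtx X) : SSet where
  obj m :=
    { a : (X.obj (op ⦋1⦌)).obj m //
      (srcM X).app m a = cstAt X x m ∧ (tgtM X).app m a = cstAt X y m }
  map {m m'} g := TypeCat.ofHom fun p =>
    ⟨(X.obj (op ⦋1⦌)).map g p.1, by
      constructor
      · rw [NatTrans.naturality_apply, p.2.1, cst_natural]
      · rw [NatTrans.naturality_apply, p.2.2, cst_natural]⟩
  map_id := by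
    intro m
    ext p
    simp
  map_comp := by
    intro m m' m'' g h
    ext p
    simp

/-- Two parallel `1`-morphism vertices (from `x` to `y`) are homotopic if there
is an edge in the mapping space `X(x,y)` connecting them: an element of
`X₁` at inner level `[1]` whose inner faces are `f`, `f'` and which is constant
at `x`, `y` on source and target. -/
def PathRel (X : SimpSpace) (x y : Vtx X) (f f' : EdgeVtx X) : Prop :=
  ∃ e : (X.obj (op ⦋1⦌)).obj (op ⦋1⦌),
    (X.obj (op ⦋1⦌)).map (SimplexCategory.δ 1).op e = f ∧
    (X.obj (op ⦋1⦌)).map (SimplexCategory.δ 0).op e = f' ∧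
    (srcM X).app (op ⦋1⦌) e = cstAt X x (op ⦋1⦌) ∧
    (tgtM X).app (op ⦋1⦌) e = cstAt X y (op ⦋1⦌)

/-- `h` is a composite of `f` followed by `g`, as witnessed by a `2`-simplex
with faces `d₂ = f`, `d₀ = g`, `d₁ = h`. -/
def IsComposite (X : SimpSpace) (f g h : EdgeVtx X) : Prop :=
  ∃ σ : (X.obj (op ⦋2⦌)).obj (op ⦋0⦌),
    (X.map (SimplexCategory.δ 2).op).app (op ⦋0⦌) σ = f ∧
    (X.map (SimplexCategory.δ 0).op).app (op ⦋0⦌) σ = g ∧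
    (X.map (SimplexCategory.δ 1).op).app (op ⦋0⦌) σ = h

/-- The degenerate (identity) edge at a vertex. -/
def idEdge (X : SimpSpace) (x : Vtx X) : EdgeVtx X :=
  (X.map (SimplexCategory.σ 0).op).app (op ⦋0⦌) x

/-- Rezk's classifying diagram `N(I[1])` of the free-living isomorphism:
`N(I[1])_{n,m} = Fun([m], Iso(I[1]^{[n]})) ≅ (Fin (m+1) → Fin (n+1) → Bool)`. -/
def NI1 : SimpSpace where
  obj d :=
    { obj := fun m => Fin (m.unop.len + 1) → Fin (d.unop.len + 1) → Bool
      map := fun g => TypeCat.ofHom fun φ a b => φ (g.unop.toOrderHom a) b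
      map_id := by intro m; rfl
      map_comp := by intro m m' m'' f g; rfl }
  map {d d'} g :=
    { app := fun m => TypeCat.ofHom fun φ a b => φ a (g.unop.toOrderHom b)
      naturality := by intro m m' h; rfl }
  map_id := by
    intro d
    rfl
  map_comp := by
    intro d d' d'' g h
    rfl

/-- Pointwise product of simplicial sets. -/
def prodSSet (A B : SSet) : SSet where
  obj m := A.obj m × B.obj m
  map f := TypeCat.ofHom fun p => (A.map f p.1, B.map f p.2)
  map_id := by intro m; ext p <;> simp
  map_comp := by intro m m' m'' f g; ext p <;> simp

/-- Pointwise product of simplicial spaces. -/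
def prodSS (X Y : SimpSpace) : SimpSpace where
  obj d := prodSSet (X.obj d) (Y.obj d)
  map {d d'} g :=
    { app := fun m => TypeCat.ofHom fun p => ((X.map g).app m p.1, (Y.map g).app m p.2)
      naturality := by
        intro m m' h
        apply ConcreteCategory.hom_ext
        intro p
        simp only [ConcreteCategory.comp_apply]
        exact Prod.ext (NatTrans.naturality_apply (X.map g) h p.1) (NatTrans.naturality_apply (Y.map g) h p.2) }
  map_id := by
    intro d
    ext m p <;> simp <;> rfl
  map_comp := by
    intro d d' d'' g h
    ext m p <;> simp <;> rfl

/-- Pointwise coproduct of simplicial spaces. -/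
def coprodSS (X Y : SimpSpace) : SimpSpace where
  obj d :=
    { obj := fun m => (X.obj d).obj m ⊕ (Y.obj d).obj m
      map := fun g => TypeCat.ofHom fun s => s.elim (fun a => .inl ((X.obj d).map g a)) (fun b => .inr ((Y.obj d).map g b))
      map_id := by intro m; ext s; cases s <;> simp
      map_comp := by intro m m' m'' f g; ext s; cases s <;> simp }
  map {d d'} g :=
    { app := fun m => TypeCat.ofHom fun s => s.elim (fun a => .inl ((X.map g).app m a)) (fun b => .inr ((Y.map g).app m b))
      naturality := by
        intro m m' h
        ext s
        cases s with
        | inl a =>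
          exact congrArg Sum.inl (NatTrans.naturality_apply (X.map g) h a)
        | inr b =>
          exact congrArg Sum.inr (NatTrans.naturality_apply (Y.map g) h b) }
  map_id := by
    intro d
    ext m s
    cases s <;> simp <;> rfl
  map_comp := by
    intro d d' d'' g h
    ext m s
    cases s <;> simp <;> rfl

/-- The endpoint inclusion `X ⟶ X × N(I[1])` at the object `0` of `I[1]`. -/
def cylEnd₀ (X : SimpSpace) : X ⟶ prodSS X NI1 where
  app d := { app := fun m => TypeCat.ofHom fun x => (x, fun _ _ => false), naturality := by intro m m' h; rfl }
  naturality := by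
    intro d d' g
    rfl

/-- The endpoint inclusion `X ⟶ X × N(I[1])` at the object `1` of `I[1]`. -/
def cylEnd₁ (X : SimpSpace) : X ⟶ prodSS X NI1 where
  app d := { app := fun m => TypeCat.ofHom fun x => (x, fun _ _ => true), naturality := by intro m m' h; rfl }
  naturality := by
    intro d d' g
    rfl

/-- The map `X ⊔ X ⟶ X × N(I[1])` induced by the two endpoint inclusions. -/
def cylIncl (X : SimpSpace) : coprodSS X X ⟶ prodSS X NI1 where
  app d :=
    { app := fun m => TypeCat.ofHom fun s => s.elim (fun x => ((cylEnd₀ X).app d).app m x) (fun x => ((cylEnd₁ X).app d).app m x)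
      naturality := by
        intro m m' h
        ext s
        cases s with
        | inl a => exact (NatTrans.naturality_apply ((cylEnd₀ X).app d) h a).symm
        | inr b => exact (NatTrans.naturality_apply ((cylEnd₁ X).app d) h b).symm }
  naturality := by
    intro d d' g
    ext m s
    cases s <;> rfl

/-- The projection `X × N(I[1]) ⟶ X`. -/
def cylProj (X : SimpSpace) : prodSS X NI1 ⟶ X where
  app d := { app := fun m => TypeCat.ofHom fun p => p.1, naturality := by intro m m' h; rfl }
  naturality := by
    intro d d' g
    rfl

/-!
The two ends of the cylinder are disjoint because they differ in the `N(I[1])`-coordinate.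
Because `I[1]` is codiscrete, maps `V ⟶ N(I[1])` are the same as `Bool`-colourings of the vertices
of `V`. A lifting problem for the projection against a cofibration `j : U ⟶ V` thus reduces to
extending a colouring of the vertices of `U` along the injective vertex map of `j`.
-/

/-- The vertex of `y ∈ V_{d,m}` at position `a` of `[m]` and `b` of `[d]`. -/
def vertexAt (V : SimpSpace) {d m : SimplexCategoryᵒᵖ}
    (a : Fin (m.unop.len + 1)) (b : Fin (d.unop.len + 1)) (y : (V.obj d).obj m) : Vtx V :=
  (V.obj (op ⦋0⦌)).map (SimplexCategory.const ⦋0⦌ m.unop a).op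
    ((V.map (SimplexCategory.const ⦋0⦌ d.unop b).op).app m y)

lemma vertexAt_map_inner (V : SimpSpace) {d m m' : SimplexCategoryᵒᵖ} (h : m ⟶ m')
    (a : Fin (m'.unop.len + 1)) (b : Fin (d.unop.len + 1)) (y : (V.obj d).obj m) :
    vertexAt V a b ((V.obj d).map h y) = vertexAt V (h.unop.toOrderHom a) b y := by
  simp only [vertexAt, NatTrans.naturality_apply, ← Functor.map_comp_apply]
  rfl

lemma vertexAt_map_outer (V : SimpSpace) {d d' m : SimplexCategoryᵒᵖ} (g : d ⟶ d')
    (a : Fin (m.unop.len + 1)) (b : Fin (d'.unop.len + 1)) (y : (V.obj d).obj m) :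
    vertexAt V a b ((V.map g).app m y) = vertexAt V a (g.unop.toOrderHom b) y := by
  have : V.map g ≫ V.map (SimplexCategory.const ⦋0⦌ d'.unop b).op =
      V.map (SimplexCategory.const ⦋0⦌ d.unop (g.unop.toOrderHom b)).op := by
    rw [← V.map_comp]
    rfl
  simp only [vertexAt, ← NatTrans.comp_app_apply, this]

lemma vertexAt_app {U V : SimpSpace} (j : U ⟶ V) {d m : SimplexCategoryᵒᵖ}
    (a : Fin (m.unop.len + 1)) (b : Fin (d.unop.len + 1)) (y : (U.obj d).obj m) :
    vertexAt V a b ((j.app d).app m y) = (j.app (op ⦋0⦌)).app (op ⦋0⦌) (vertexAt U a b y) := by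
  simp only [vertexAt, NatTrans.naturality_apply, ← NatTrans.comp_app_apply, j.naturality]

/-- Since `I[1]` is codiscrete, a simplex of `N(I[1])` is just a colouring of its vertices, so any
vertex colouring `c` of `V` defines a map `V ⟶ N(I[1])`. -/
def cylLift {V X : SimpSpace} (g : V ⟶ X) (c : Vtx V → Bool) : V ⟶ prodSS X NI1 where
  app d :=
    { app := fun m => TypeCat.ofHom fun y => ((g.app d).app m y, fun a b => c (vertexAt V a b y))
      naturality := fun m m' h => by
        apply ConcreteCategory.hom_ext
        intro y
        simp only [ConcreteCategory.comp_apply]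
        exact Prod.ext (NatTrans.naturality_apply (g.app d) h y)
          (funext₂ fun a b => congrArg c (vertexAt_map_inner V h a b y)) }
  naturality d d' e := by
    ext m y
    exact Prod.ext (congrArg (fun t : V.obj d ⟶ X.obj d' => t.app m y) (g.naturality e))
      (funext₂ fun a b => congrArg c (vertexAt_map_outer V e a b y))

lemma cylLift_comp_cylProj {V X : SimpSpace} (g : V ⟶ X) (c : Vtx V → Bool) :
    cylLift g c ≫ cylProj X = g :=
  rfl

lemma comp_cylLift {U V X : SimpSpace} (j : U ⟶ V) (g : V ⟶ X) (c : Vtx V → Bool) :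
    j ≫ cylLift g c = cylLift (j ≫ g) (c ∘ (j.app (op ⦋0⦌)).app (op ⦋0⦌)) := by
  ext d m y
  exact Prod.ext rfl (funext₂ fun a b => congrArg c (vertexAt_app j a b y))

lemma eq_cylLift {V X : SimpSpace} (f : V ⟶ prodSS X NI1) :
    f = cylLift (f ≫ cylProj X) fun z => ((f.app (op ⦋0⦌)).app (op ⦋0⦌) z).2 0 0 := by
  ext d m y
  refine Prod.ext rfl (funext₂ fun a b => ?_)
  show _ = ((f.app (op ⦋0⦌)).app (op ⦋0⦌) (vertexAt V a b y)).2 0 0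
  rw [← vertexAt_app]
  rfl

lemma cylIncl_lwMono (X : SimpSpace) : LwMono (cylIncl X) := by
  rintro d m (x | x) (x' | x') h
  · exact congrArg Sum.inl (congrArg Prod.fst h)
  · exact absurd (congrFun (congrFun (congrArg Prod.snd h) 0) 0) Bool.false_ne_true
  · exact absurd (congrFun (congrFun (congrArg Prod.snd h) 0) 0).symm Bool.false_ne_true
  · exact congrArg Sum.inr (congrArg Prod.fst h)

lemma cylProj_hasLiftingProperty {U V : SimpSpace} (j : U ⟶ V)
    (hj : Function.Injective ((j.app (op ⦋0⦌)).app (op ⦋0⦌))) (X : SimpSpace) :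
    HasLiftingProperty j (cylProj X) where
  sq_hasLift {f g} sq := by
    let colour : Vtx U → Bool := fun z => ((f.app (op ⦋0⦌)).app (op ⦋0⦌) z).2 0 0
    refine ⟨⟨{ l := cylLift g (Function.extend ((j.app (op ⦋0⦌)).app (op ⦋0⦌)) colour fun _ => false)
               fac_left := ?_
               fac_right := cylLift_comp_cylProj g _ }⟩⟩
    rw [comp_cylLift, Function.extend_comp hj, ← sq.w]
    exact (eq_cylLift f).symm

theorem statement15 (X : SimpSpace) :
    -- the inclusion of the two ends is a cofibration
    LwMono (cylIncl X) ∧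
    -- the projection is a trivial Reedy fibration
    TrivialReedyFibration (cylProj X) :=
  ⟨cylIncl_lwMono X, fun _ _ j hj => cylProj_hasLiftingProperty j (hj _ _) X⟩

end
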